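/- arXiv:1602.00246 — 3 statements merged into one kernel-verified Lean document; each statement's English description precedes it below -/
import Mathlib

section
/- Let n ≥ 1 and h ≥ 1 be integers, and define b_1 = h + 1 and b_{k+1} = f(n,h)_{b_k + 1} + b_k + 1 for k ≥ 1. Then every antichain sequence s_1, …, s_L in ℤ_{≥0}^2 × {1, …, n} whose degree growth is bounded by the function i ↦ f(n,h)_i satisfies L ≤ b_n. -/
/-- The sequence `f(n,h)_k` from the paper: `f(n,h)_0 = 0`, `f(n,h)_1 = f(n,h)_2 = h`,
`f(n,h)_k = f(n,h)_{k-1} + f(n,h)_{k-2}` for `3 ≤ k ≤ n+1`, and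
`f(n,h)_k = f(n,h)_{k-1} + f(n,h)_{k-2} - 1` for `k > n+1`. -/
def fseq (n h : ℕ) : ℕ → ℕ
  | 0 => 0
  | 1 => h
  | 2 => h
  | (k+3) =>
    if k + 3 ≤ n + 1 then fseq n h (k+2) + fseq n h (k+1)
    else fseq n h (k+2) + fseq n h (k+1) - 1

/-- The sequence `b_k` (indexed from 1): `b_1 = h + 1`, `b_{k+1} = f(n,h)_{b_k + 1} + b_k + 1`. -/
def bseq (n h : ℕ) : ℕ → ℕ
  | 0 => 0
  | 1 => h + 1
  | (k+2) => fseq n h (bseq n h (k+1) + 1) + bseq n h (k+1) + 1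

/-!
Within one colour the entries form an antichain of `ℕ × ℕ`, and an antichain through a point
`(a, b)` has at most `a + b + 1` elements: the other points have distinct first coordinates `< a`
or distinct second coordinates `< b`. So the colour class of the entry at (0-based) position `i`
has at most `f(n,h)_{i+1} + 1` elements. Ordering the colours by first occurrence, a new colour
appears at a position no larger than the number `N` of entries of the colours seen before, so it
adds at most `f(n,h)_{N+1} + 1` entries. As `f(n,h)` is monotone, the first `k` colours occupy at
most `b_k` entries, and there are at most `n` colours.
-/

open Finset

lemma fseq_succ_succ_succ (n h k : ℕ) : fseq n h (k + 3) =
    if k + 3 ≤ n + 1 then fseq n h (k + 2) + fseq n h (k + 1)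
    else fseq n h (k + 2) + fseq n h (k + 1) - 1 := rfl

lemma fseq_zero_right (n : ℕ) : ∀ k, fseq n 0 k = 0
  | 0 | 1 | 2 => rfl
  | k + 3 => by simp [fseq_succ_succ_succ, fseq_zero_right n (k + 1), fseq_zero_right n (k + 2)]

lemma le_fseq_succ (n h : ℕ) : ∀ k, h ≤ fseq n h (k + 1)
  | 0 | 1 => le_rfl
  | k + 2 => by
    have h1 : h ≤ fseq n h (k + 1) := le_fseq_succ n h k
    have h2 : h ≤ fseq n h (k + 2) := le_fseq_succ n h (k + 1)
    rw [fseq_succ_succ_succ]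
    split <;> omega

lemma fseq_monotone (n h : ℕ) : Monotone (fseq n h) := by
  obtain rfl | hh := Nat.eq_zero_or_pos h
  · simpa [funext (fseq_zero_right n)] using monotone_const
  refine monotone_nat_of_le_succ fun k => ?_
  match k with
  | 0 => exact Nat.zero_le _
  | 1 => exact le_rfl
  | k + 2 =>
    have := le_fseq_succ n h k
    rw [fseq_succ_succ_succ]
    split <;> omega

lemma bseq_eq_iterate (n h : ℕ) :
    ∀ k, bseq n h k = (fun b => fseq n h (b + 1) + b + 1)^[k] 0
  | 0 => rfl
  | 1 => rfl
  | k + 2 => by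
    rw [Function.iterate_succ_apply', ← bseq_eq_iterate n h (k + 1)]
    rfl

lemma Prod.eq_of_fst_eq_of_isAntichain {α β : Type*} [LinearOrder α] [LinearOrder β]
    {A : Set (α × β)} (hA : IsAntichain (· ≤ ·) A) {p q : α × β} (hp : p ∈ A) (hq : q ∈ A)
    (h : p.1 = q.1) : p = q := by
  rcases le_total p.2 q.2 with h2 | h2
  · exact hA.eq hp hq (Prod.mk_le_mk.2 ⟨h.le, h2⟩)
  · exact (hA.eq hq hp (Prod.mk_le_mk.2 ⟨h.ge, h2⟩)).symm

lemma Prod.eq_of_snd_eq_of_isAntichain {α β : Type*} [LinearOrder α] [LinearOrder β]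
    {A : Set (α × β)} (hA : IsAntichain (· ≤ ·) A) {p q : α × β} (hp : p ∈ A) (hq : q ∈ A)
    (h : p.2 = q.2) : p = q := by
  rcases le_total p.1 q.1 with h1 | h1
  · exact hA.eq hp hq (Prod.mk_le_mk.2 ⟨h1, h.le⟩)
  · exact (hA.eq hq hp (Prod.mk_le_mk.2 ⟨h1, h.ge⟩)).symm

lemma card_le_of_isAntichain_of_mem {A : Finset (ℕ × ℕ)}
    (hA : IsAntichain (· ≤ ·) (A : Set (ℕ × ℕ))) {p : ℕ × ℕ} (hp : p ∈ A) :
    #A ≤ p.1 + p.2 + 1 := by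
  have hlt : ∀ q ∈ A.erase p, q.1 < p.1 ∨ q.2 < p.2 := fun q hq => by
    obtain ⟨hqp, hq⟩ := mem_erase.1 hq
    have hpq : ¬ p ≤ q := hA hp hq (Ne.symm hqp)
    simpa only [Prod.le_def, not_and_or, not_le] using hpq
  have hinj : #(A.erase p) ≤ #(range (p.1 + p.2)) := by
    refine card_le_card_of_injOn (fun q => if q.1 < p.1 then q.1 else p.1 + q.2)
      (fun q hq => ?_) (fun q hq r hr hqr => ?_)
    · have := hlt q hq
      simp only [coe_range, Set.mem_Iio]
      split <;> omega
    · have hq' := hlt q hq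
      have hr' := hlt r hr
      replace hq := (mem_erase.1 hq).2
      replace hr := (mem_erase.1 hr).2
      simp only at hqr
      split at hqr <;> split at hqr
      · exact Prod.eq_of_fst_eq_of_isAntichain hA hq hr hqr
      · omega
      · omega
      · exact Prod.eq_of_snd_eq_of_isAntichain hA hq hr (by omega)
  rw [card_range, card_erase_of_mem hp] at hinj
  omega

section ColorClasses

variable {α : Type*} [DecidableEq α] {L : ℕ} (c : Fin L → α)

def colorsBefore (t : ℕ) : Finset α := image c {i | (i : ℕ) < t}

lemma colorsBefore_succ {t : ℕ} (ht : t < L) :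
    colorsBefore c (t + 1) = insert (c ⟨t, ht⟩) (colorsBefore c t) := by
  ext a
  simp only [colorsBefore, mem_image, mem_filter, mem_univ, true_and, mem_insert]
  constructor
  · rintro ⟨i, hi, rfl⟩
    rcases Nat.lt_succ_iff_lt_or_eq.1 hi with hi | hi
    · exact Or.inr ⟨i, hi, rfl⟩
    · exact Or.inl (congrArg c (Fin.ext hi.symm)).symm
  · rintro (rfl | ⟨i, hi, rfl⟩)
    · exact ⟨⟨t, ht⟩, Nat.lt_succ_self t, rfl⟩
    · exact ⟨i, Nat.lt_succ_of_lt hi, rfl⟩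

lemma le_card_filter_mem_colorsBefore {t : ℕ} (ht : t ≤ L) :
    t ≤ #{j | c j ∈ colorsBefore c t} := by
  calc t = #{i : Fin L | (i : ℕ) < t} := by rw [Fin.card_filter_val_lt, min_eq_right ht]
    _ ≤ _ := card_le_card fun i hi => mem_filter.2 ⟨mem_univ i, mem_image_of_mem c hi⟩

variable {c} {g : ℕ → ℕ}

lemma card_filter_mem_colorsBefore_le (hg : Monotone g)
    (hclass : ∀ i, #{j | c j = c i} ≤ g i + 1) {t : ℕ} (ht : t ≤ L) :
    #{j | c j ∈ colorsBefore c t} ≤ (fun b => g b + b + 1)^[#(colorsBefore c t)] 0 := by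
  induction t with
  | zero => simp [colorsBefore]
  | succ t ih =>
    have ht' : t < L := by omega
    rw [colorsBefore_succ c ht']
    by_cases hseen : c ⟨t, ht'⟩ ∈ colorsBefore c t
    · rw [insert_eq_of_mem hseen]
      exact ih ht'.le
    rw [card_insert_of_notMem hseen, Function.iterate_succ_apply']
    have hunion : #{j | c j ∈ insert (c ⟨t, ht'⟩) (colorsBefore c t)}
        ≤ #{j | c j = c ⟨t, ht'⟩} + #{j | c j ∈ colorsBefore c t} := by
      simp only [mem_insert, filter_or]
      exact card_union_le _ _
    have hgt := hg ((le_card_filter_mem_colorsBefore c ht'.le).trans (ih ht'.le))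
    have hct : #{j | c j = c ⟨t, ht'⟩} ≤ g t + 1 := hclass ⟨t, ht'⟩
    have := ih ht'.le
    omega

lemma card_le_iterate_of_card_fiber_le (hg : Monotone g)
    (hclass : ∀ i, #{j | c j = c i} ≤ g i + 1) :
    L ≤ (fun b => g b + b + 1)^[#(univ.image c)] 0 := by
  have hL := card_filter_mem_colorsBefore_le hg hclass le_rfl
  have hall : colorsBefore c L = univ.image c := by
    simp [colorsBefore]
  rwa [hall, filter_true_of_mem fun j _ => mem_image_of_mem c (mem_univ j), card_univ,
    Fintype.card_fin] at hL

end ColorClasses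

lemma card_fiber_snd_le_of_isAntichain {β : Type*} [DecidableEq β] {L : ℕ}
    {s : Fin L → (ℕ × ℕ) × β}
    (hanti : ∀ i j : Fin L, i ≠ j → ¬ ((s i).2 = (s j).2 ∧ (s i).1 ≤ (s j).1)) (i : Fin L) :
    #{j | (s j).2 = (s i).2} ≤ (s i).1.1 + (s i).1.2 + 1 := by
  set F : Finset (Fin L) := {j | (s j).2 = (s i).2}
  have hF : ∀ j ∈ F, (s j).2 = (s i).2 := fun j hj => (mem_filter.1 hj).2
  have hinj : Set.InjOn (fun j => (s j).1) F := fun j hj k hk hjk => by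
    by_contra hne
    exact hanti j k hne ⟨(hF j hj).trans (hF k hk).symm, hjk.le⟩
  have hA : IsAntichain (· ≤ ·) ((F.image fun j => (s j).1 : Finset (ℕ × ℕ)) : Set (ℕ × ℕ)) := by
    rintro _ hp _ hq hpq hle
    obtain ⟨j, hj, rfl⟩ := mem_image.1 hp
    obtain ⟨k, hk, rfl⟩ := mem_image.1 hq
    exact hanti j k (fun h => hpq (h ▸ rfl)) ⟨(hF j hj).trans (hF k hk).symm, hle⟩
  rw [← card_image_of_injOn hinj]
  exact card_le_of_isAntichain_of_mem hA (mem_image_of_mem _ (mem_filter.2 ⟨mem_univ i, rfl⟩))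

theorem antichain_length_le_bseq_general (n h : ℕ)
    (L : ℕ) (s : Fin L → (ℕ × ℕ) × Fin n)
    (hanti : ∀ i j : Fin L, i ≠ j → ¬ ((s i).2 = (s j).2 ∧ (s i).1 ≤ (s j).1))
    (hdeg : ∀ i : Fin L, (s i).1.1 + (s i).1.2 ≤ fseq n h (i.val + 1)) :
    L ≤ bseq n h n := by
  have hg : Monotone fun i => fseq n h (i + 1) := fun _ _ hij => fseq_monotone n h (by omega)
  have hclass (i : Fin L) : #{j | (s j).2 = (s i).2} ≤ fseq n h (i + 1) + 1 :=
    (card_fiber_snd_le_of_isAntichain hanti i).trans (by have := hdeg i; omega)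
  have hcolors : #(univ.image fun i => (s i).2) ≤ n :=
    (card_le_univ _).trans (Fintype.card_fin n).le
  rw [bseq_eq_iterate]
  exact (card_le_iterate_of_card_fiber_le hg hclass).trans
    (Function.monotone_iterate_of_id_le (fun b => by dsimp; omega) hcolors 0)

/-- Every antichain sequence `s_1, …, s_L` in `ℤ_{≥0}^2 × {1, …, n}` (elements with
different last components are incomparable; on equal last components the order is
componentwise) whose degree growth is bounded by `i ↦ f(n,h)_i` satisfies `L ≤ b_n`. -/
theorem antichain_length_le_bseq (n h : ℕ) (hn : 1 ≤ n) (hh : 1 ≤ h)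
    (L : ℕ) (s : Fin L → (ℕ × ℕ) × Fin n)
    (hanti : ∀ i j : Fin L, i ≠ j → ¬ ((s i).2 = (s j).2 ∧ (s i).1 ≤ (s j).1))
    (hdeg : ∀ i : Fin L, (s i).1.1 + (s i).1.2 ≤ fseq n h (i.val + 1)) :
    L ≤ bseq n h n :=
  antichain_length_le_bseq_general n h L s hanti hdeg
end

section
/- Let h ≥ 1 be an integer, and define c_0 = 1 and c_i = c_{i−1} + 1 + h·Fib_{c_{i−1}+1} − (h − i) for 1 ≤ i ≤ h. Then there exists an antichain sequence in ℤ_{≥0}^3 of length exactly c_h whose degree growth is bounded by the function i ↦ h·Fib_i. In particular, such an antichain sequence is given explicitly by (h,0,0), (h−1,1,0), (h−1,0,h+1), (h−2,2h+2,0), …, where for each 1 ≤ i ≤ h one inserts the elements (h−i, h·Fib_{c_{i−1}+1} − (h−i), 0), (h−i, h·Fib_{c_{i−1}+1} − (h−i) − 1, 1), …, (h−i, 0, h·Fib_{c_i} − (h−i)) occupying positions c_{i−1}+1 through c_i. -/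
/-!
The `p`-th point (`p ≥ 1`) lies in block `i`, the least `i` with `p ≤ c_i`, and has first
coordinate `h - i`; inside a block the second coordinate drops by one at each step, and the third
one pads the degree up to exactly `h·Fib_p`. So every later point is smaller than every earlier one
in some coordinate, while its degree is at least as large: since a point strictly below another
in the componentwise order has strictly smaller degree, no later point lies below an earlier one
either. The recursion for `c_i` makes each block exactly as long as the second coordinate allows.
-/

def cseq (h : ℕ) : ℕ → ℕ
  | 0 => 1
  | (i+1) => cseq h i + 1 + h * Nat.fib (cseq h i + 1) - (h - (i + 1))

open Finset

theorem Pi.not_le_of_exists_lt_of_monotone_sum {α ι : Type*} [LinearOrder α] [Fintype ι]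
    {s : α → ι → ℕ} (hdrop : ∀ a b, a < b → ∃ i, s b i < s a i)
    (hsum : Monotone fun a ↦ ∑ i, s a i) {a b : α} (hab : a ≠ b) : ¬ s a ≤ s b := by
  intro hle
  rcases hab.lt_or_gt with hlt | hgt
  · obtain ⟨i, hi⟩ := hdrop a b hlt
    exact (hle i).not_gt hi
  · obtain ⟨i, hi⟩ := hdrop b a hgt
    have : ∑ k, s a k < ∑ k, s b k :=
      sum_lt_sum (fun k _ ↦ hle k) ⟨i, mem_univ i, hi⟩
    exact (hsum hgt.le).not_gt this

theorem Nat.le_mul_fib (h : ℕ) {n : ℕ} (hn : 0 < n) : h ≤ h * Nat.fib n :=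
  Nat.le_mul_of_pos_right h (Nat.fib_pos.2 hn)

namespace cseq

variable (h : ℕ)

theorem succ_add (i : ℕ) :
    cseq h (i + 1) + (h - (i + 1)) = cseq h i + 1 + h * Nat.fib (cseq h i + 1) := by
  have := Nat.le_mul_fib h (cseq h i).add_one_pos
  rw [cseq]
  omega

theorem strictMono : StrictMono (cseq h) := by
  refine strictMono_nat_of_lt_succ fun i ↦ ?_
  have := succ_add h i
  have := Nat.le_mul_fib h (cseq h i).add_one_pos
  omega

theorem exists_ge (p : ℕ) : ∃ i, p ≤ cseq h i :=
  ⟨p, (strictMono h).id_le p⟩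

end cseq

def blockIndex (h p : ℕ) : ℕ :=
  Nat.find (cseq.exists_ge h p)

section blockIndex

variable {h p q : ℕ}

theorem le_cseq_blockIndex : p ≤ cseq h (blockIndex h p) :=
  Nat.find_spec (cseq.exists_ge h p)

theorem blockIndex_le {i : ℕ} (hp : p ≤ cseq h i) : blockIndex h p ≤ i :=
  Nat.find_min' (cseq.exists_ge h p) hp

theorem cseq_lt_of_blockIndex_eq_succ {b : ℕ} (hb : blockIndex h p = b + 1) : cseq h b < p :=
  not_le.1 (Nat.find_min (cseq.exists_ge h p) (hb ▸ b.lt_succ_self : b < blockIndex h p))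

theorem blockIndex_mono : Monotone (blockIndex h) :=
  fun _ _ hpq ↦ blockIndex_le (hpq.trans le_cseq_blockIndex)

def secondCoord (h p : ℕ) : ℕ :=
  match blockIndex h p with
  | 0 => 0
  | b + 1 => h * Nat.fib (cseq h b + 1) - (h - (b + 1)) - (p - cseq h b - 1)

theorem sub_blockIndex_add_secondCoord_le (hp : 1 ≤ p) :
    h - blockIndex h p + secondCoord h p ≤ h * Nat.fib p := by
  rcases hb : blockIndex h p with _ | b
  · simpa [secondCoord, hb] using Nat.le_mul_fib h hp
  · have hlt : cseq h b + 1 ≤ p := cseq_lt_of_blockIndex_eq_succ hb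
    have := Nat.mul_le_mul_left h (Nat.fib_mono hlt)
    have := Nat.le_mul_fib h hp
    simp only [secondCoord, hb]
    omega

theorem secondCoord_lt_of_blockIndex_eq (hp : 1 ≤ p) (hpq : p < q)
    (hb : blockIndex h p = blockIndex h q) : secondCoord h q < secondCoord h p := by
  have hq : q ≤ cseq h (blockIndex h q) := le_cseq_blockIndex
  rcases hb' : blockIndex h p with _ | b
  · rw [← hb, hb', cseq] at hq
    omega
  · have hp' := cseq_lt_of_blockIndex_eq_succ hb'
    have := cseq.succ_add h b
    rw [← hb, hb'] at hq
    simp only [secondCoord, ← hb, hb']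
    omega

end blockIndex

def antichainPoint (h p : ℕ) : Fin 3 → ℕ :=
  ![h - blockIndex h p, secondCoord h p,
    h * Nat.fib p - (h - blockIndex h p) - secondCoord h p]

theorem sum_antichainPoint {h p : ℕ} (hp : 1 ≤ p) :
    ∑ k, antichainPoint h p k = h * Nat.fib p := by
  have := sub_blockIndex_add_secondCoord_le (h := h) hp
  simp only [antichainPoint, Fin.sum_univ_three, Matrix.cons_val]
  omega

theorem exists_antichainPoint_lt {h p q : ℕ} (hp : 1 ≤ p) (hpq : p < q) (hq : q ≤ cseq h h) :
    ∃ k, antichainPoint h q k < antichainPoint h p k := by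
  rcases (blockIndex_mono (h := h) hpq.le).lt_or_eq with hlt | heq
  · have := blockIndex_le hq
    exact ⟨0, by simp only [antichainPoint, Matrix.cons_val]; omega⟩
  · exact ⟨1, by simpa [antichainPoint] using secondCoord_lt_of_blockIndex_eq hp hpq heq⟩

theorem exists_antichain_length_cseq_general (h : ℕ) :
    ∃ s : Fin (cseq h h) → (Fin 3 → ℕ),
      (∀ i j : Fin (cseq h h), i ≠ j → ¬ s i ≤ s j) ∧
      (∀ i : Fin (cseq h h), (∑ k, s i k) ≤ h * Nat.fib (i.val + 1)) := by
  have hdeg (i : Fin (cseq h h)) : ∑ k, antichainPoint h (i + 1) k = h * Nat.fib (i + 1) :=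
    sum_antichainPoint i.val.succ_pos
  refine ⟨fun i ↦ antichainPoint h (i + 1), fun i j hij ↦ ?_, fun i ↦ (hdeg i).le⟩
  refine Pi.not_le_of_exists_lt_of_monotone_sum (α := Fin (cseq h h))
    (s := fun i ↦ antichainPoint h (i + 1))
    (fun a b hab ↦ ?_) (fun a b hab ↦ ?_) hij
  · exact exists_antichainPoint_lt a.val.succ_pos (Nat.succ_lt_succ hab) b.isLt
  · simp only [hdeg]
    exact Nat.mul_le_mul_left h (Nat.fib_mono (Nat.succ_le_succ hab))

/-- There exists an antichain sequence in `ℤ_{≥0}^3` (componentwise order) of length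
exactly `c_h` whose degree growth is bounded by `i ↦ h·Fib_i`. -/
theorem exists_antichain_length_cseq (h : ℕ) (hh : 1 ≤ h) :
    ∃ s : Fin (cseq h h) → (Fin 3 → ℕ),
      (∀ i j : Fin (cseq h h), i ≠ j → ¬ s i ≤ s j) ∧
      (∀ i : Fin (cseq h h), (∑ k, s i k) ≤ h * Nat.fib (i.val + 1)) :=
  exists_antichain_length_cseq_general h
end

section
/- The maximal length of an antichain sequence s_1, …, s_L in ℤ_{≥0}^4 with deg(s_i) ≤ Fib_i for all 1 ≤ i ≤ L is equal to 5. -/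
/-!
The first two terms have degree at most `1` and are incomparable, so they are distinct unit
vectors `e_a`, `e_b`. No later term lies above `e_a` or `e_b`, so the later terms live in the
plane of the two remaining coordinates. In `ℕ²` an antichain through a point `x` has at most
`x₁ + x₂ + 1` elements: apart from `x`, its points lie either strictly left and above `x`, with
distinct first coordinates below `x₁`, or strictly right and below, with distinct second
coordinates below `x₂`. Taking `x` to be the third term, of degree at most `Fib 3 = 2`, leaves
room for at most three terms after the first two. The antichain
`e₁, e₂, 2e₃, e₃ + 2e₄, 3e₄` attains `5`.
-/

open Finset

theorem Prod.card_le_of_antichain {κ : Type*} [Fintype κ] (t : κ → ℕ × ℕ)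
    (ht : ∀ i j, i ≠ j → ¬ t i ≤ t j) (i₀ : κ) :
    Fintype.card κ ≤ (t i₀).1 + (t i₀).2 + 1 := by
  obtain ⟨x, hx⟩ : ∃ x, t i₀ = x := ⟨_, rfl⟩
  rw [hx]
  have hsplit : ∀ i, ((t i).1 = x.1 ∧ (t i).2 = x.2) ∨ ((t i).1 < x.1 ∧ x.2 < (t i).2) ∨
      (x.1 < (t i).1 ∧ (t i).2 < x.2) := by
    intro i
    by_cases hi : i = i₀
    · simp [hi, hx]
    · have h₁ := ht i i₀ hi
      have h₂ := ht i₀ i (Ne.symm hi)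
      rw [hx] at h₁ h₂
      simp only [Prod.le_def, not_and_or, not_le] at h₁ h₂
      omega
  let g (i : κ) : ℕ := if (t i).1 < x.1 then (t i).1 else x.1 + (t i).2
  have hg : ∀ i, g i < x.1 + x.2 + 1 := fun i => by
    simp only [g]
    rcases hsplit i with hi | hi | hi <;> split_ifs <;> omega
  have hinj : Function.Injective fun i => (⟨g i, hg i⟩ : Fin (x.1 + x.2 + 1)) := by
    intro i j hij
    by_contra hne
    have h₁ := ht i j hne
    have h₂ := ht j i (Ne.symm hne)
    simp only [Prod.le_def, not_and_or, not_le] at h₁ h₂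
    simp only [Fin.mk.injEq, g] at hij
    rcases hsplit i with hi | hi | hi <;> rcases hsplit j with hj | hj | hj <;>
      split_ifs at hij <;> omega
  simpa using Fintype.card_le_of_injective _ hinj

theorem Pi.le_iff_of_eq_zero_of_notMem {ι α : Type*} [AddMonoid α] [PartialOrder α]
    [CanonicallyOrderedAdd α] {y z : ι → α} {s : Finset ι}
    (hy : ∀ k ∉ s, y k = 0) : y ≤ z ↔ ∀ k ∈ s, y k ≤ z k := by
  refine ⟨fun h k _ => h k, fun h k => ?_⟩
  by_cases hk : k ∈ s
  · exact h k hk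
  · simp [hy k hk]

theorem Pi.exists_eq_single_of_sum_le_one {ι : Type*} [Fintype ι] [DecidableEq ι] {x : ι → ℕ}
    (hx : x ≠ 0) (hsum : ∑ k, x k ≤ 1) : ∃ a, x = Pi.single a 1 := by
  obtain ⟨a, ha⟩ := Function.ne_iff.mp hx
  simp only [Pi.zero_apply] at ha
  have hnonneg : ∀ k ∈ univ, 0 ≤ x k := fun k _ => Nat.zero_le (x k)
  refine ⟨a, funext fun k => ?_⟩
  by_cases hk : k = a
  · subst hk
    have hxk := (single_le_sum hnonneg (mem_univ k)).trans hsum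
    simp only [Pi.single_eq_same]
    omega
  · have hxak := (add_le_sum hnonneg (mem_univ a) (mem_univ k) (Ne.symm hk)).trans hsum
    simp only [Pi.single_eq_of_ne hk]
    omega

theorem Pi.apply_eq_zero_of_not_single_le {ι : Type*} [DecidableEq ι] {y : ι → ℕ} {a : ι}
    (h : ¬ Pi.single a 1 ≤ y) : y a = 0 := by
  by_contra hya
  refine h fun k => ?_
  by_cases hk : k = a
  · subst hk
    simp only [Pi.single_eq_same]
    omega
  · simp [Pi.single_eq_of_ne hk]

theorem antichain_length_le_five {L : ℕ} (s : Fin L → Fin 4 → ℕ)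
    (hanti : ∀ i j, i ≠ j → ¬ s i ≤ s j) (hdeg : ∀ i : Fin L, ∑ k, s i k ≤ Nat.fib (i.val + 1)) :
    L ≤ 5 := by
  by_cases hL : L < 3
  · omega
  obtain ⟨n, rfl⟩ : ∃ n, L = n + 3 := ⟨L - 3, by omega⟩
  have h01 : (0 : Fin (n + 3)) ≠ 1 := by simp
  obtain ⟨a, ha⟩ := Pi.exists_eq_single_of_sum_le_one (x := s 0)
    (fun h => hanti 0 1 h01 (by rw [h]; exact zero_le)) (by simpa using hdeg 0)
  obtain ⟨b, hb⟩ := Pi.exists_eq_single_of_sum_le_one (x := s 1)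
    (fun h => hanti 1 0 h01.symm (by rw [h]; exact zero_le)) (by simpa using hdeg 1)
  have hab : a ≠ b := by
    rintro rfl
    exact hanti 0 1 h01 (by rw [ha, hb])
  obtain ⟨c, d, hcd, hcompl⟩ : ∃ c d, c ≠ d ∧ ({a, b}ᶜ : Finset (Fin 4)) = {c, d} := by
    rw [← card_eq_two, card_compl, card_pair hab, Fintype.card_fin]
  let u (j : Fin (n + 1)) : Fin 4 → ℕ := s (j.addNat 2)
  have hvanish : ∀ j k, k ∉ ({c, d} : Finset (Fin 4)) → u j k = 0 := by
    intro j k hk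
    rw [← hcompl, notMem_compl, mem_insert, mem_singleton] at hk
    have h₀ := hanti 0 (j.addNat 2) (Fin.ne_of_val_ne (by rw [Fin.val_addNat]; simp))
    have h₁ := hanti 1 (j.addNat 2) (Fin.ne_of_val_ne (by rw [Fin.val_addNat]; simp))
    rw [ha] at h₀
    rw [hb] at h₁
    rcases hk with rfl | rfl
    · exact Pi.apply_eq_zero_of_not_single_le h₀
    · exact Pi.apply_eq_zero_of_not_single_le h₁
  have hle : ∀ i j, u i ≤ u j ↔ (u i c, u i d) ≤ (u j c, u j d) := by
    intro i j
    simp [Pi.le_iff_of_eq_zero_of_notMem (hvanish i), Prod.le_def]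
  have hcard := Prod.card_le_of_antichain (fun j => (u j c, u j d))
    (fun i j hij h => hanti _ _ (by simpa [Fin.ext_iff] using hij) ((hle i j).2 h)) 0
  have hdeg2 : u 0 c + u 0 d ≤ 2 :=
    (add_le_sum (fun k _ => Nat.zero_le _) (mem_univ c) (mem_univ d) hcd).trans
      (by simpa [u, Nat.fib_add_two] using hdeg ((0 : Fin (n + 1)).addNat 2))
  simp only [Fintype.card_fin] at hcard
  omega

/-- The maximal length of an antichain sequence in `ℤ_{≥0}^4` (componentwise order)
with `deg(s_i) ≤ Fib_i` is equal to `5`. -/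
theorem maximal_antichain_length_dim4_h1 :
    IsGreatest {L : ℕ | ∃ s : Fin L → (Fin 4 → ℕ),
      (∀ i j : Fin L, i ≠ j → ¬ s i ≤ s j) ∧
      (∀ i : Fin L, (∑ k, s i k) ≤ Nat.fib (i.val + 1))} 5 := by
  refine ⟨⟨![![1, 0, 0, 0], ![0, 1, 0, 0], ![0, 0, 2, 0], ![0, 0, 1, 2], ![0, 0, 0, 3]], ?_, ?_⟩,
    fun L ⟨s, hanti, hdeg⟩ => antichain_length_le_five s hanti hdeg⟩
  · simp only [Pi.le_def]
    decide
  · decide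
end
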